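/- Let P be a continuous (atomless, with density positive at μ_k) probability measure on ℝⁿ. If M = {μ_1, ..., μ_k} with μ_k ∉ {μ_1, ..., μ_{k−1}} and P assigns positive mass to every ball of positive radius around μ_k, then J_cp({μ_1, ..., μ_{k−1}}, P) > J_cp({μ_1, ..., μ_k}, P). -/

import Mathlib

/-! Adding the centre `c` never increases the distance to the nearest centre, and on the ball of
radius `infDist c S / 2` around `c` it strictly decreases it. That ball carries positive mass, so
the integrated squared distance drops strictly. -/

open MeasureTheory Metric

theorem MeasureTheory.integral_lt_integral_of_le_of_lt_on {α : Type*} [MeasurableSpace α]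
    {μ : Measure α} {f g : α → ℝ} (hf : Integrable f μ) (hg : Integrable g μ)
    (hle : ∀ x, f x ≤ g x) {t : Set α} (ht : 0 < μ t) (hlt : ∀ x ∈ t, f x < g x) :
    ∫ x, f x ∂μ < ∫ x, g x ∂μ := by
  rw [← sub_pos, ← integral_sub hg hf,
    integral_pos_iff_support_of_nonneg (fun x => sub_nonneg.2 (hle x)) (hg.sub hf)]
  exact ht.trans_le (measure_mono fun x hx => (sub_pos.2 (hlt x hx)).ne')

namespace Metric

variable {X : Type*} [PseudoMetricSpace X] {s : Set X} {c x : X}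

theorem infDist_insert_le (hs : s.Nonempty) : infDist x (insert c s) ≤ infDist x s :=
  infDist_le_infDist_of_subset (Set.subset_insert c s) hs

theorem infDist_insert_lt_of_mem_ball (hx : x ∈ ball c (infDist c s / 2)) :
    infDist x (insert c s) < infDist x s := by
  have hxc : dist x c < infDist c s / 2 := hx
  have h_new : infDist x (insert c s) ≤ dist x c := infDist_le_dist_of_mem (Set.mem_insert c s)
  have h_old : infDist c s ≤ infDist x s + dist x c := by
    simpa [dist_comm] using infDist_le_infDist_add_dist (x := c) (y := x) (s := s)
  linarith

end Metric

theorem kmeans_cost_strict_decrease_of_new_centre_general {n : ℕ}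
    (P : Measure (EuclideanSpace ℝ (Fin n)))
    (S : Finset (EuclideanSpace ℝ (Fin n))) (hS : S.Nonempty)
    (c : EuclideanSpace ℝ (Fin n)) (hc : c ∉ S)
    (hball : ∀ ε : ℝ, 0 < ε → ε < infDist c (S : Set (EuclideanSpace ℝ (Fin n))) / 3 →
      0 < P (ball c ε))
    (h1 : Integrable (fun x => (infDist x (S : Set (EuclideanSpace ℝ (Fin n)))) ^ 2) P)
    (h2 : Integrable
      (fun x => (infDist x (insert c (S : Set (EuclideanSpace ℝ (Fin n))))) ^ 2) P) :
    ∫ x, (infDist x (insert c (S : Set (EuclideanSpace ℝ (Fin n))))) ^ 2 ∂P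
      < ∫ x, (infDist x (S : Set (EuclideanSpace ℝ (Fin n)))) ^ 2 ∂P := by
  have hd : 0 < infDist c (S : Set (EuclideanSpace ℝ (Fin n))) :=
    (S.finite_toSet.isClosed.notMem_iff_infDist_pos (Finset.coe_nonempty.2 hS)).1 hc
  refine integral_lt_integral_of_le_of_lt_on h2 h1
    (fun x => pow_le_pow_left₀ infDist_nonneg (infDist_insert_le hS) 2)
    (hball _ (by positivity : 0 < infDist c _ / 4) (by linarith)) fun x hx => ?_
  have hx' : x ∈ ball c (infDist c (S : Set (EuclideanSpace ℝ (Fin n))) / 2) :=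
    ball_subset_ball (by linarith) hx
  exact pow_lt_pow_left₀ (infDist_insert_lt_of_mem_ball hx') infDist_nonneg two_ne_zero

theorem kmeans_cost_strict_decrease_of_new_centre {n : ℕ}
    (P : Measure (EuclideanSpace ℝ (Fin n))) [IsProbabilityMeasure P] [NullSingletonClass P]
    (S : Finset (EuclideanSpace ℝ (Fin n))) (hS : S.Nonempty)
    (c : EuclideanSpace ℝ (Fin n)) (hc : c ∉ S)
    (hball : ∀ ε : ℝ, 0 < ε → ε < infDist c (S : Set (EuclideanSpace ℝ (Fin n))) / 3 →
      0 < P (ball c ε))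
    (h1 : Integrable (fun x => (infDist x (S : Set (EuclideanSpace ℝ (Fin n)))) ^ 2) P)
    (h2 : Integrable
      (fun x => (infDist x (insert c (S : Set (EuclideanSpace ℝ (Fin n))))) ^ 2) P) :
    ∫ x, (infDist x (insert c (S : Set (EuclideanSpace ℝ (Fin n))))) ^ 2 ∂P
      < ∫ x, (infDist x (S : Set (EuclideanSpace ℝ (Fin n)))) ^ 2 ∂P :=
  kmeans_cost_strict_decrease_of_new_centre_general P S hS c hc hball h1 h2
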